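/- arXiv:1612.02142 — 9 statements merged into one kernel-verified Lean document; each statement's English description precedes it below -/
import Mathlib

section
/- Let K ⊆ L be an extension of fields, Γ₀ a linearly ordered commutative group with zero, w a valuation on L with values in Γ₀, and v the restriction of w to K. If K is dense in L for the valuation topology, then the value groups coincide: for every x ∈ L with x ≠ 0 there exists y ∈ K with y ≠ 0 and w(x) = v(y). -/
/-- Lemma 2.1 (values): if `K` is dense in `L` for the valuation topology, then the
value groups coincide: every nonzero `x ∈ L` has the same value as some nonzero `y ∈ K`. -/
theorem dense_extension_value_group_eq
    {K L Γ₀ : Type*} [Field K] [Field L] [LinearOrderedCommGroupWithZero Γ₀]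
    (ι : K →+* L) (w : Valuation L Γ₀)
    (hdense : ∀ x : L, ∀ γ : Γ₀, γ ≠ 0 → ∃ y : K, w (x - ι y) < γ) :
    ∀ x : L, x ≠ 0 → ∃ y : K, y ≠ 0 ∧ w x = w (ι y) := by
  intro x hx
  obtain ⟨y, hy⟩ := hdense x (w x) (w.ne_zero_iff.mpr hx)
  have hval : w (ι y) = w x := w.map_eq_of_sub_lt (by rwa [w.map_sub_swap])
  refine ⟨y, ?_, hval.symm⟩
  rintro rfl
  rw [map_zero, map_zero, eq_comm, w.zero_iff] at hval
  exact hx hval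
end

section
/- Let K ⊆ L be an extension of fields, Γ₀ a linearly ordered commutative group with zero, w a valuation on L with values in Γ₀. If K is dense in L for the valuation topology, then for every n ≥ 1, GL_n(K) is dense in GL_n(L): for every invertible n×n matrix M over L and every nonzero γ ∈ Γ₀ there exists an invertible n×n matrix M₀ with entries in K such that w(M i j − M₀ i j) < γ for all indices i, j. -/
/-!
The valuation of the determinant is locally constant around a nonsingular matrix: if every
entry of `N` is within `ε` of the corresponding entry of `M`, each of the `n!` terms of
`det M - det N` has valuation below `ε * B ^ n`, with `B` a bound for the entries, and the
ultrametric inequality bounds the sum by the same quantity. Approximating the entries of an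
invertible `M` over `L` closely enough by elements of `K` therefore yields a matrix over `K`
whose image in `L` has the same nonzero determinant valuation as `M`.
-/

namespace Valuation

variable {R Γ₀ : Type*} [CommRing R] [LinearOrderedCommGroupWithZero Γ₀] (v : Valuation R Γ₀)

open Finset in
theorem map_prod_sub_prod_lt {ι : Type*} (s : Finset ι) {f g : ι → R} {B ε : Γ₀}
    (hB : 1 ≤ B) (hε : ε ≠ 0) (hf : ∀ i ∈ s, v (f i) ≤ B) (hg : ∀ i ∈ s, v (g i) ≤ B)
    (hfg : ∀ i ∈ s, v (f i - g i) < ε) :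
    v (∏ i ∈ s, f i - ∏ i ∈ s, g i) < ε * B ^ #s := by
  classical
  induction s using Finset.induction_on with
  | empty => simpa using zero_lt_iff.mpr hε
  | insert a s ha ih =>
    simp only [forall_mem_insert] at hf hg hfg
    have hB0 : B ≠ 0 := (zero_lt_one.trans_le hB).ne'
    have hprod : v (∏ i ∈ s, f i) ≤ B ^ #s := by
      simpa only [map_prod, prod_const] using prod_le_prod' hf.2
    rw [prod_insert ha, prod_insert ha, card_insert_of_notMem ha,
      show f a * ∏ i ∈ s, f i - g a * ∏ i ∈ s, g i
        = (f a - g a) * ∏ i ∈ s, f i + g a * (∏ i ∈ s, f i - ∏ i ∈ s, g i) by ring]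
    refine v.map_add_lt ?_ ?_ <;> rw [map_mul]
    · calc v (f a - g a) * v (∏ i ∈ s, f i) < ε * B ^ #s :=
            mul_lt_mul_of_lt_of_le_of_nonneg_of_pos hfg.1 hprod zero_le
              (zero_lt_iff.mpr (pow_ne_zero _ hB0))
        _ ≤ ε * B ^ (#s + 1) := by rw [pow_succ, ← mul_assoc]; exact le_mul_of_one_le_right' hB
    · calc v (g a) * v (∏ i ∈ s, f i - ∏ i ∈ s, g i) < B * (ε * B ^ #s) :=
            mul_lt_mul_of_le_of_lt_of_nonneg_of_pos hg.1 (ih hf.2 hg.2 hfg.2) zero_le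
              (zero_lt_iff.mpr hB0)
        _ = ε * B ^ (#s + 1) := by rw [pow_succ, mul_left_comm, mul_comm B]

theorem map_det_sub_det_lt {n : Type*} [Fintype n] [DecidableEq n] {M N : Matrix n n R}
    {B ε : Γ₀} (hB : 1 ≤ B) (hε : ε ≠ 0) (hM : ∀ i j, v (M i j) ≤ B) (hN : ∀ i j, v (N i j) ≤ B)
    (hMN : ∀ i j, v (M i j - N i j) < ε) :
    v (M.det - N.det) < ε * B ^ Fintype.card n := by
  rw [Matrix.det_apply', Matrix.det_apply', ← Finset.sum_sub_distrib]
  refine v.map_sum_lt (mul_ne_zero hε (pow_ne_zero _ (zero_lt_one.trans_le hB).ne')) fun σ _ ↦ ?_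
  have hsign : v (Equiv.Perm.sign σ : R) = 1 := by
    rcases Int.units_eq_one_or (Equiv.Perm.sign σ) with h | h <;> simp [h]
  rw [← mul_sub, map_mul, hsign, one_mul]
  exact v.map_prod_sub_prod_lt _ hB hε (fun i _ ↦ hM _ _) (fun i _ ↦ hN _ _) (fun i _ ↦ hMN _ _)

/-- The openness of `GL_n` for the valuation topology. -/
theorem exists_forall_map_det_eq {n : Type*} [Fintype n] [DecidableEq n] (M : Matrix n n R)
    (hM : v M.det ≠ 0) :
    ∃ ε ≠ 0, ∀ N : Matrix n n R, (∀ i j, v (M i j - N i j) < ε) → v N.det = v M.det := by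
  obtain ⟨B₀, hB₀⟩ := Finite.bddAbove_range fun p : n × n ↦ v (M p.1 p.2)
  set B := max 1 B₀
  have hB : 1 ≤ B := le_max_left _ _
  have hMB : ∀ i j, v (M i j) ≤ B := fun i j ↦ (hB₀ ⟨(i, j), rfl⟩).trans (le_max_right _ _)
  have hBn : B ^ Fintype.card n ≠ 0 := pow_ne_zero _ (zero_lt_one.trans_le hB).ne'
  -- `ε ≤ 1` keeps the entries of a nearby `N` bounded by `B`, and `ε * B ^ card n ≤ v M.det`.
  set ε := min 1 (v M.det / B ^ Fintype.card n)
  have hε : ε ≠ 0 := by simp [ε, hM, hBn]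
  refine ⟨ε, hε, fun N hMN ↦ ?_⟩
  have hNB : ∀ i j, v (N i j) ≤ B := fun i j ↦ by
    rw [← sub_sub_cancel (M i j) (N i j)]
    exact (v.map_sub _ _).trans
      (max_le (hMB i j) (((hMN i j).le.trans (min_le_left _ _)).trans hB))
  refine v.map_eq_of_sub_lt ?_
  calc v (N.det - M.det) = v (M.det - N.det) := v.map_sub_swap _ _
    _ < ε * B ^ Fintype.card n := v.map_det_sub_det_lt hB hε hMB hNB hMN
    _ ≤ v M.det := (mul_le_mul_left (min_le_right _ _) _).trans (div_mul_cancel₀ _ hBn).le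

end Valuation

theorem dense_extension_GL_dense_general
    {K L Γ₀ : Type*} [Field K] [Field L] [LinearOrderedCommGroupWithZero Γ₀]
    (ι : K →+* L) (w : Valuation L Γ₀)
    (hdense : ∀ x : L, ∀ γ : Γ₀, γ ≠ 0 → ∃ y : K, w (x - ι y) < γ)
    (n : ℕ) (M : Matrix (Fin n) (Fin n) L) (hM : IsUnit M)
    (γ : Γ₀) (hγ : γ ≠ 0) :
    ∃ M₀ : Matrix (Fin n) (Fin n) K, IsUnit M₀ ∧
      ∀ i j, w (M i j - ι (M₀ i j)) < γ := by
  have hdet : w M.det ≠ 0 := by simpa [Matrix.isUnit_iff_isUnit_det] using hM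
  obtain ⟨ε, hε, hε_det⟩ := w.exists_forall_map_det_eq M hdet
  choose y hy using fun x ↦ hdense x (min ε γ) (by simp [hε, hγ])
  set M₀ := M.map y
  have hM₀ : w (ι.mapMatrix M₀).det = w M.det :=
    hε_det _ fun i j ↦ (hy _).trans_le (min_le_left _ _)
  refine ⟨M₀, ?_, fun i j ↦ (hy _).trans_le (min_le_right _ _)⟩
  rw [Matrix.isUnit_iff_isUnit_det, isUnit_iff_ne_zero, ← map_ne_zero ι, ι.map_det,
    ← w.ne_zero_iff, hM₀]
  exact hdet

/-- Step in Lemma 2.1: if `K` is dense in `L` for the valuation topology, then `GL_n(K)`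
is dense in `GL_n(L)`: every invertible matrix over `L` can be approximated entrywise,
to any prescribed precision, by an invertible matrix with entries in `K`. -/
theorem dense_extension_GL_dense
    {K L Γ₀ : Type*} [Field K] [Field L] [LinearOrderedCommGroupWithZero Γ₀]
    (ι : K →+* L) (w : Valuation L Γ₀)
    (hdense : ∀ x : L, ∀ γ : Γ₀, γ ≠ 0 → ∃ y : K, w (x - ι y) < γ)
    (n : ℕ) (hn : 1 ≤ n) (M : Matrix (Fin n) (Fin n) L) (hM : IsUnit M)
    (γ : Γ₀) (hγ : γ ≠ 0) :
    ∃ M₀ : Matrix (Fin n) (Fin n) K, IsUnit M₀ ∧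
      ∀ i j, w (M i j - ι (M₀ i j)) < γ :=
  dense_extension_GL_dense_general ι w hdense n M hM γ hγ
end

section
/- Let K ⊆ L be an extension of fields, Γ₀ a linearly ordered commutative group with zero, w a valuation on L with values in Γ₀. If K is dense in L for the valuation topology, then every O_L-lattice in Lⁿ has a basis with entries in K: for every invertible n×n matrix M over L there exists an invertible n×n matrix M₀ with entries in K such that every entry of M₀⁻¹·M and every entry of (M₀⁻¹·M)⁻¹ has w-value ≤ 1 (i.e., M₀⁻¹·M ∈ GL_n(O_L), where O_L = {x ∈ L | w(x) ≤ 1} is the valuation ring of w). -/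
/-!
Choose `c ≠ 0` bounding the values of the entries of `M⁻¹` and, by density, `M₀` over `K` with
`w (M₀ - M) < c⁻¹` entrywise. Then `A = M⁻¹ M₀ ≡ 1` modulo the maximal ideal of `O_L`, so
`det A ≡ 1` is a unit of `O_L` and `A ∈ GL_n(O_L)`; finally `M₀⁻¹ M = A⁻¹`.
-/

open Matrix

theorem Matrix.det_sub_one_mem {R n : Type*} [CommRing R] [Fintype n] [DecidableEq n]
    {I : Ideal R} {A : Matrix n n R} (h : ∀ i j, (A - 1) i j ∈ I) : A.det - 1 ∈ I := by
  have hA : (Ideal.Quotient.mk I).mapMatrix (A - 1) = 0 := by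
    ext i j
    exact Ideal.Quotient.eq_zero_iff_mem.2 (h i j)
  rw [map_sub, map_one, sub_eq_zero] at hA
  rw [← Ideal.Quotient.eq, RingHom.map_det, hA, det_one, map_one]

theorem Matrix.isUnit_of_isUnit_map {K L n : Type*} [Field K] [CommRing L] [Nontrivial L]
    [Fintype n] [DecidableEq n] (f : K →+* L) {M : Matrix n n K} (h : IsUnit (M.map f)) :
    IsUnit M := by
  rw [isUnit_iff_isUnit_det, ← RingHom.mapMatrix_apply, ← RingHom.map_det] at h
  rw [isUnit_iff_isUnit_det, isUnit_iff_ne_zero]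
  rintro h0
  simp [h0] at h

theorem Finite.exists_ne_zero_forall_le {ι Γ₀ : Type*} [LinearOrderedCommGroupWithZero Γ₀]
    [Finite ι] (f : ι → Γ₀) :
    ∃ c ≠ 0, ∀ i, f i ≤ c := by
  obtain ⟨c, hc⟩ := Finite.exists_le f
  exact ⟨max c 1, (zero_lt_one.trans_le (le_max_right c 1)).ne',
    fun i => le_max_of_le_left (hc i)⟩

namespace Valuation

variable {L Γ₀ : Type*} [LinearOrderedCommGroupWithZero Γ₀]

theorem exists_matrix_map_sub_lt {K : Type*} [Ring L] (w : Valuation L Γ₀) (ι : K → L)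
    {γ : Γ₀} (hdense : ∀ x : L, ∃ y : K, w (x - ι y) < γ) {m n : Type*} (M : Matrix m n L) :
    ∃ M₀ : Matrix m n K, ∀ i j, w ((M₀.map ι - M) i j) < γ := by
  choose y hy using hdense
  exact ⟨M.map y, fun i j => by simpa [w.map_sub_swap] using hy (M i j)⟩

theorem map_matrix_mul_apply_lt_one [Ring L] (w : Valuation L Γ₀) {l m n : Type*} [Fintype m]
    {N : Matrix l m L} {E : Matrix m n L} {c : Γ₀} (hc : c ≠ 0)
    (hN : ∀ i j, w (N i j) ≤ c) (hE : ∀ i j, w (E i j) < c⁻¹) (i : l) (j : n) :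
    w ((N * E) i j) < 1 := by
  refine w.map_sum_lt one_ne_zero fun k _ => ?_
  calc w (N i k * E k j) = w (N i k) * w (E k j) := w.map_mul _ _
    _ < c * c⁻¹ :=
      mul_lt_mul_of_le_of_lt_of_nonneg_of_pos (hN i k) (hE k j) zero_le (zero_lt_iff.2 hc)
    _ = 1 := mul_inv_cancel₀ hc

theorem exists_GL_integer_map_eq_of_sub_one_lt [Field L] (w : Valuation L Γ₀) {n : Type*}
    [Fintype n] [DecidableEq n]
    {A : Matrix n n L} (h : ∀ i j, w ((A - 1) i j) < 1) :
    ∃ g : GL n w.integer, (g : Matrix n n w.integer).map (↑) = A := by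
  have hle : ∀ i j, w (A i j) ≤ 1 := fun i j => by
    have h1 : w ((1 : Matrix n n L) i j) ≤ 1 := by
      rw [one_apply]; split_ifs <;> simp
    simpa using w.map_add_le (h i j).le h1
  set B : Matrix n n w.integer := of fun i j => ⟨A i j, hle i j⟩
  have hB : w.integer.subtype.mapMatrix (B - 1) = A - 1 := by
    rw [_root_.map_sub, map_one]; rfl
  have hdet : B.det - 1 ∈ w.ltIdeal 1 :=
    det_sub_one_mem fun i j => by rw [← hB] at h; exact h i j
  have hdet1 : w (B.det : L) = 1 := by
    simpa using w.map_one_add_of_lt hdet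
  exact ⟨GeneralLinearGroup.mk'' B ((integer.integers w).isUnit_of_one' hdet1), rfl⟩

end Valuation

theorem dense_extension_lattices_eq_general
    {K L Γ₀ : Type*} [Field K] [Field L] [LinearOrderedCommGroupWithZero Γ₀]
    (ι : K →+* L) (w : Valuation L Γ₀)
    (hdense : ∀ x : L, ∀ γ : Γ₀, γ ≠ 0 → ∃ y : K, w (x - ι y) < γ)
    (n : ℕ) (M : Matrix (Fin n) (Fin n) L) (hM : IsUnit M) :
    ∃ M₀ : Matrix (Fin n) (Fin n) K, IsUnit M₀ ∧
      (∀ i j, w (((M₀.map ι)⁻¹ * M) i j) ≤ 1) ∧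
      (∀ i j, w ((((M₀.map ι)⁻¹ * M)⁻¹) i j) ≤ 1) := by
  have hMdet := (isUnit_iff_isUnit_det M).mp hM
  obtain ⟨c, hc, hMinv⟩ :=
    Finite.exists_ne_zero_forall_le fun p : Fin n × Fin n => w (M⁻¹ p.1 p.2)
  obtain ⟨M₀, hM₀⟩ := w.exists_matrix_map_sub_lt ι (fun x => hdense x _ (inv_ne_zero hc)) M
  set A := M⁻¹ * M₀.map ι
  have hA : A - 1 = M⁻¹ * (M₀.map ι - M) := by
    rw [Matrix.mul_sub, nonsing_inv_mul M hMdet]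
  obtain ⟨g, hg⟩ := w.exists_GL_integer_map_eq_of_sub_one_lt
    (hA ▸ w.map_matrix_mul_apply_lt_one hc (fun i j => hMinv (i, j)) hM₀)
  have hAinv : A⁻¹ = (↑g : Matrix (Fin n) (Fin n) w.integer)⁻¹.map (↑) :=
    inv_eq_right_inv (hg ▸ GeneralLinearGroup.coe_map_mul_map_inv w.integer.subtype g)
  have hM₀A : M₀.map ι = M * A := by
    rw [← Matrix.mul_assoc, mul_nonsing_inv M hMdet, Matrix.one_mul]
  have hA_unit : IsUnit A := hg ▸ (GeneralLinearGroup.map w.integer.subtype g).isUnit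
  have hMA : (M₀.map ι)⁻¹ * M = A⁻¹ := by
    rw [hM₀A, Matrix.mul_inv_rev, Matrix.mul_assoc, nonsing_inv_mul M hMdet, Matrix.mul_one]
  refine ⟨M₀, isUnit_of_isUnit_map ι (hM₀A ▸ hM.mul hA_unit), fun i j => ?_, fun i j => ?_⟩
  · rw [hMA, hAinv]
    exact (↑g : Matrix (Fin n) (Fin n) w.integer)⁻¹ i j |>.2
  · rw [hMA, nonsing_inv_nonsing_inv A ((isUnit_iff_isUnit_det A).mp hA_unit), ← hg]
    exact (g : Matrix (Fin n) (Fin n) w.integer) i j |>.2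

/-- Lemma 2.1, `S_n(K) = S_n(L)`: if `K` is dense in `L` for the valuation topology,
then every `O_L`-lattice in `Lⁿ` has a basis with entries in `K`: for every invertible
matrix `M` over `L` there is an invertible matrix `M₀` over `K` with
`M₀⁻¹ · M ∈ GL_n(O_L)`, i.e. all entries of `M₀⁻¹ · M` and of its inverse have
`w`-value at most `1`. -/
theorem dense_extension_lattices_eq
    {K L Γ₀ : Type*} [Field K] [Field L] [LinearOrderedCommGroupWithZero Γ₀]
    (ι : K →+* L) (w : Valuation L Γ₀)
    (hdense : ∀ x : L, ∀ γ : Γ₀, γ ≠ 0 → ∃ y : K, w (x - ι y) < γ)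
    (n : ℕ) (hn : 1 ≤ n) (M : Matrix (Fin n) (Fin n) L) (hM : IsUnit M) :
    ∃ M₀ : Matrix (Fin n) (Fin n) K, IsUnit M₀ ∧
      (∀ i j, w (((M₀.map ι)⁻¹ * M) i j) ≤ 1) ∧
      (∀ i j, w ((((M₀.map ι)⁻¹ * M)⁻¹) i j) ≤ 1) :=
  dense_extension_lattices_eq_general ι w hdense n M hM
end

section
/- Let p be a prime, K a separably closed field of characteristic p, Γ₀ a linearly ordered commutative group with zero, and v a nontrivial valuation on K with values in Γ₀. Then the value group of v is divisible: for every a ∈ K with a ≠ 0 and every integer n ≥ 1 there exists x ∈ K with x ≠ 0 and v(x)^n = v(a). -/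
/-!
Put `N = p * n`. Since `N = 0` in `K`, the polynomial `X ^ N + c X - a` has derivative `c`, so it is
separable for `c ≠ 0` and has a root `x` in `K`. Choosing `c ≠ 0` with `v c ^ N < v a ^ (N - 1)`
forces `x ^ N` to dominate `c * x`, so `v x ^ N = v a`, and `x ^ p` is the required `n`-th root.
-/

namespace Valuation

variable {R K Γ₀ : Type*} [LinearOrderedCommGroupWithZero Γ₀]

theorem pow_eq_of_pow_add_mul_eq [CommRing R] (v : Valuation R Γ₀) {N : ℕ} {a c x : R}
    (hc : v c ^ N < v a ^ (N - 1)) (hx : x ^ N + c * x = a) : v x ^ N = v a := by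
  obtain ⟨m, rfl⟩ : ∃ m, N = m + 1 := Nat.exists_eq_succ_of_ne_zero (by rintro rfl; simp at hc)
  rw [Nat.add_sub_cancel] at hc
  rcases eq_or_ne (v x) 0 with hx0 | hx0
  · have ha : v a = 0 := by
      rw [← hx]
      exact le_zero_iff.mp ((v.map_add _ _).trans (by simp [hx0]))
    rw [hx0, ha, zero_pow m.succ_ne_zero]
  rw [← hx, ← v.map_pow, v.map_add_eq_of_lt_left]
  by_contra! hle
  have hva : v a ≤ v c * v x := by
    rw [← hx, ← v.map_mul]
    exact (v.map_add _ _).trans (max_le hle le_rfl)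
  have hvx : v x ^ m ≤ v c := by
    rw [map_pow, map_mul, pow_succ] at hle
    exact le_of_mul_le_mul_right hle (zero_lt_iff.mpr hx0)
  refine hc.not_ge ?_
  calc v a ^ m ≤ (v c * v x) ^ m := pow_le_pow_left' hva m
    _ = v c ^ m * v x ^ m := mul_pow _ _ _
    _ ≤ v c ^ m * v c := mul_le_mul_right hvx _
    _ = v c ^ (m + 1) := (pow_succ _ _).symm

theorem IsNontrivial.exists_pow_lt_pow_sub_one [Field K] {v : Valuation K Γ₀} [v.IsNontrivial]
    {a : K} (ha : a ≠ 0) {N : ℕ} (hN : N ≠ 0) : ∃ c ≠ 0, v c ^ N < v a ^ (N - 1) := by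
  obtain ⟨s, hs0, hs1⟩ := IsNontrivial.exists_lt_one (v := v)
  have hsN : v s ^ N < 1 := pow_lt_one₀ zero_le hs1 hN
  rcases le_total (v a) 1 with ha1 | ha1
  · refine ⟨s * a, mul_ne_zero hs0 ha, ?_⟩
    calc v (s * a) ^ N = v s ^ N * v a ^ N := by rw [map_mul, mul_pow]
      _ < v a ^ N := mul_lt_of_lt_one_left (pow_pos (v.pos_iff.mpr ha) _) hsN
      _ ≤ v a ^ (N - 1) := pow_le_pow_right_of_le_one' ha1 (Nat.sub_le N 1)
  · exact ⟨s, hs0, hsN.trans_le (one_le_pow₀ ha1)⟩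

end Valuation

/-- The value group of a separably closed non-trivially valued field of characteristic `p`
is divisible: every value `v a` (with `a ≠ 0`) is an `n`-th power of a value `v x`. -/
theorem SepClosed.value_group_divisible
    (p : ℕ) [Fact p.Prime] {K Γ₀ : Type*} [Field K] [CharP K p] [IsSepClosed K]
    [LinearOrderedCommGroupWithZero Γ₀] (v : Valuation K Γ₀)
    (hv : ∃ t : K, t ≠ 0 ∧ v t ≠ 1) :
    ∀ a : K, a ≠ 0 → ∀ n : ℕ, 1 ≤ n → ∃ x : K, x ≠ 0 ∧ (v x) ^ n = v a := by
  intro a ha n hn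
  obtain ⟨t, ht0, ht1⟩ := hv
  have : v.IsNontrivial := ⟨t, v.ne_zero_iff.mpr ht0, ht1⟩
  have hpn : 2 ≤ p * n := le_mul_of_le_of_one_le (Fact.out : p.Prime).two_le hn
  obtain ⟨c, hc0, hc⟩ := Valuation.IsNontrivial.exists_pow_lt_pow_sub_one (v := v) ha
    (by omega : p * n ≠ 0)
  obtain ⟨x, hx⟩ := IsSepClosed.exists_root_C_mul_X_pow_add_C_mul_X_add_C' p (p * n) 1 c (-a)
    (dvd_mul_right p n) hpn hc0
  have hvx : v x ^ (p * n) = v a := v.pow_eq_of_pow_add_mul_eq hc (by linear_combination hx)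
  have hx0 : x ≠ 0 :=
    v.ne_zero_iff.mp (ne_zero_pow (by omega) (hvx ▸ v.ne_zero_iff.mpr ha))
  exact ⟨x ^ p, pow_ne_zero p hx0, by rw [map_pow, ← pow_mul, hvx]⟩
end

section
/- Let p be a prime, K a separably closed field of characteristic p, Γ₀ a linearly ordered commutative group with zero, and v a nontrivial valuation on K with values in Γ₀. Then the residue field of the valuation ring of v is algebraically closed; concretely, for every monic polynomial P over K of degree ≥ 1 all of whose coefficients c satisfy v(c) ≤ 1, there exists x ∈ K with v(x) ≤ 1 and v(P(x)) < 1. -/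
/-!
A monic `P` with integral coefficients can be perturbed by a polynomial `Q` of lower degree with
coefficients of valuation `< 1` so that `P + Q` is separable: `Q = c` for all but finitely many
small `c` when `P' ≠ 0`, and `Q = t X` with `t` small and nonzero when `P' = 0`. Then `P + Q` has
a root `x` in the separably closed field `K`; as a root of a monic polynomial with integral
coefficients, `x` is integral, and `P(x) = -Q(x)` has valuation `< 1`.
-/

open Polynomial

namespace Polynomial

theorem natDegree_ne_one_of_derivative_eq_zero {R : Type*} [Semiring R] {P : R[X]}
    (hP : derivative P = 0) : P.natDegree ≠ 1 := by
  intro h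
  have hcoeff : P.coeff 1 = 0 := by simpa [coeff_derivative] using congrArg (coeff · 0) hP
  rw [← h, coeff_natDegree, leadingCoeff_eq_zero] at hcoeff
  simp [hcoeff] at h

theorem finite_setOf_not_separable_add_C {K : Type*} [Field K] {P : K[X]}
    (hP : derivative P ≠ 0) : {c : K | ¬ (P + C c).Separable}.Finite := by
  set L := AlgebraicClosure K
  refine ((P.derivative.rootSet_finite L).image fun a => -aeval a P).preimage
    (algebraMap K L).injective.injOn |>.subset fun c hc => ?_
  rw [Set.mem_ofPred_eq, Separable, derivative_add, derivative_C, add_zero,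
    isCoprime_iff_aeval_ne_zero_of_isAlgClosed K L] at hc
  push Not at hc
  obtain ⟨a, hPc, hP'⟩ := hc
  refine ⟨a, (mem_rootSet_of_ne hP).2 hP', ?_⟩
  rw [aeval_add, aeval_C] at hPc
  exact neg_eq_of_add_eq_zero_right hPc

end Polynomial

namespace Valuation

section CommRing

variable {R Γ₀ : Type*} [CommRing R] [LinearOrderedCommGroupWithZero Γ₀] (v : Valuation R Γ₀)

theorem le_one_of_monic_of_isRoot {S : R[X]} (hS : S.Monic) (hcoeff : ∀ i, v (S.coeff i) ≤ 1)
    {x : R} (hx : S.IsRoot x) : v x ≤ 1 := by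
  nontriviality R
  obtain ⟨q, hq, -, hqm⟩ := lifts_and_degree_eq_and_monic
    (f := algebraMap v.integer R) ((lifts_iff_coeff_lifts _).2 fun n => ⟨⟨_, hcoeff n⟩, rfl⟩) hS
  exact (integer.integers v).isIntegral_iff_v_le_one.1 ⟨q, hqm, by rwa [← eval_map, hq]⟩

theorem eval_lt_one_of_coeff_lt_one {Q : R[X]} (hcoeff : ∀ i, v (Q.coeff i) < 1) {x : R}
    (hx : v x ≤ 1) : v (Q.eval x) < 1 := by
  rw [eval_eq_sum_range]
  refine v.map_sum_lt one_ne_zero fun i _ => ?_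
  rw [v.map_mul, v.map_pow]
  exact mul_lt_one_of_lt_of_le (hcoeff i) (pow_le_one₀ zero_le hx)

end CommRing

section Field

variable {K Γ₀ : Type*} [Field K] [LinearOrderedCommGroupWithZero Γ₀] (v : Valuation K Γ₀)
  [v.IsNontrivial]

theorem infinite_setOf_lt_one : {x : K | v x < 1}.Infinite := by
  obtain ⟨t, ht, hvt⟩ := IsNontrivial.exists_lt_one (v := v)
  have hvt₀ : 0 < v t := zero_lt_iff.2 (v.ne_zero_iff.2 ht)
  refine Set.infinite_of_injective_forall_mem (f := fun n : ℕ => t ^ (n + 1)) (fun m n hmn => ?_)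
    fun n => show v _ < 1 by rw [v.map_pow]; exact pow_lt_one₀ zero_le hvt n.succ_ne_zero
  have := congrArg v hmn
  simp only [v.map_pow] at this
  exact Nat.succ_injective ((pow_right_strictAnti₀ hvt₀ hvt).injective this)

theorem exists_separable_perturbation {P : K[X]} (hP : 0 < P.degree) :
    ∃ Q : K[X], Q.degree < P.degree ∧ (∀ i, v (Q.coeff i) < 1) ∧ (P + Q).Separable := by
  by_cases hP' : derivative P = 0
  · obtain ⟨t, ht, hvt⟩ := IsNontrivial.exists_lt_one (v := v)
    refine ⟨C t * X, ?_, fun i => ?_, ?_⟩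
    · have := natDegree_ne_one_of_derivative_eq_zero hP'
      rw [degree_C_mul_X ht, degree_eq_natDegree (ne_zero_of_degree_gt hP)]
      rw [← natDegree_pos_iff_degree_pos] at hP
      exact_mod_cast (by omega : 1 < P.natDegree)
    · rw [coeff_C_mul_X]
      split_ifs
      exacts [hvt, by simp]
    · rw [Separable, derivative_add, hP', zero_add, derivative_C_mul_X]
      simpa using (isCoprime_mul_unit_left_right (isUnit_C.2 ht.isUnit) _ 1).2 isCoprime_one_right
  · obtain ⟨c, hvc, hsep⟩ :=
      (v.infinite_setOf_lt_one.sdiff (finite_setOf_not_separable_add_C hP')).nonempty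
    refine ⟨C c, degree_C_le.trans_lt hP, fun i => ?_, not_not.1 hsep⟩
    rw [coeff_C]
    split_ifs
    exacts [hvc, by simp]

end Field

end Valuation

theorem SepClosed.residue_field_algClosed_general
    {K Γ₀ : Type*} [Field K] [IsSepClosed K]
    [LinearOrderedCommGroupWithZero Γ₀] (v : Valuation K Γ₀)
    (hv : ∃ t : K, t ≠ 0 ∧ v t ≠ 1)
    (P : Polynomial K) (hmonic : P.Monic) (hdeg : 1 ≤ P.natDegree)
    (hcoeff : ∀ i, v (P.coeff i) ≤ 1) :
    ∃ x : K, v x ≤ 1 ∧ v (P.eval x) < 1 := by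
  obtain ⟨t, ht, hvt⟩ := hv
  have : v.IsNontrivial := ⟨t, v.ne_zero_iff.2 ht, hvt⟩
  have hP : 0 < P.degree := natDegree_pos_iff_degree_pos.1 hdeg
  obtain ⟨Q, hQdeg, hQ, hsep⟩ := v.exists_separable_perturbation hP
  obtain ⟨x, hx⟩ := IsSepClosed.exists_root (P + Q)
    (by rw [degree_add_eq_left_of_degree_lt hQdeg]; exact hP.ne') hsep
  have hx1 : v x ≤ 1 := v.le_one_of_monic_of_isRoot (hmonic.add_of_left hQdeg)
    (fun i => by rw [coeff_add]; exact v.map_add_le (hcoeff i) (hQ i).le) hx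
  refine ⟨x, hx1, ?_⟩
  rw [eq_neg_of_add_eq_zero_left (by simpa using hx : P.eval x + Q.eval x = 0), v.map_neg]
  exact v.eval_lt_one_of_coeff_lt_one hQ hx1

/-- The residue field of a separably closed non-trivially valued field of characteristic `p`
is algebraically closed: every monic polynomial of degree `≥ 1` with coefficients in the
valuation ring has a root in the valuation ring modulo the maximal ideal, i.e. there is
`x` with `v x ≤ 1` and `v (P(x)) < 1`. -/
theorem SepClosed.residue_field_algClosed
    (p : ℕ) [Fact p.Prime] {K Γ₀ : Type*} [Field K] [CharP K p] [IsSepClosed K]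
    [LinearOrderedCommGroupWithZero Γ₀] (v : Valuation K Γ₀)
    (hv : ∃ t : K, t ≠ 0 ∧ v t ≠ 1)
    (P : Polynomial K) (hmonic : P.Monic) (hdeg : 1 ≤ P.natDegree)
    (hcoeff : ∀ i, v (P.coeff i) ≤ 1) :
    ∃ x : K, v x ≤ 1 ∧ v (P.eval x) < 1 :=
  SepClosed.residue_field_algClosed_general v hv P hmonic hdeg hcoeff
end

section
/- Let M be a field, F₀ a subfield of M, and let A, F, C be intermediate fields of M/F₀ with F₀ ⊆ C ⊆ F. If A and F are linearly disjoint over F₀, then the compositum A ⊔ C (the intermediate field generated by A and C) is linearly disjoint from F over C (as C-subalgebras of M), and (A ⊔ C) ∩ F = C. -/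
/-!
Put `C[A] = Algebra.adjoin C A`. An `F₀`-basis `(aₖ)` of `A` stays linearly independent over `F`,
hence over `C`, and it spans `C[A]` over `C`, so it is a `C`-basis of `C[A]`. For a `C`-basis
`(bⱼ)` of `F`, the products `bⱼ aₖ` are `C`-linearly independent by the tower law for linear
independence (`F` over `C`, then `M` over `F`), so `C[A]` and `F` are linearly disjoint over `C`.
Linear disjointness from the field `F` passes from the domain `C[A]` to its fraction field
`C(A) = A ⊔ C`, and linearly disjoint fields over `C` meet in `C`.
-/

section

variable {R S M : Type*} [CommSemiring R] [Semiring M] [Algebra R M]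

theorem Algebra.toSubmodule_adjoin_eq_span_basis [CommSemiring S] [Algebra R S] [Algebra S M]
    [IsScalarTower R S M] {κ : Type*} (A : Subalgebra R M) (a : Module.Basis κ R A) :
    Subalgebra.toSubmodule (Algebra.adjoin S (A : Set M)) =
      Submodule.span S (Set.range (A.val ∘ a)) := by
  have hA : (A : Set M) = Submodule.span R (Set.range (A.val ∘ a)) := by
    rw [Set.range_comp, ← AlgHom.coe_toLinearMap, Submodule.span_image, a.span_eq,
      Submodule.map_top]
    ext x
    simp
  rw [Algebra.adjoin_eq_span_of_subset, hA, Submodule.span_span_of_tower]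
  exact fun x hx ↦ Submodule.subset_span (Submonoid.closure_le.2 le_rfl hx : x ∈ A.toSubmonoid)

variable [CommRing S] [Algebra R S] [Algebra S M] [IsScalarTower R S M]

noncomputable def Module.Basis.algebraAdjoin {κ : Type*} {A : Subalgebra R M}
    (a : Module.Basis κ R A) (hli : LinearIndependent S (A.val ∘ a)) :
    Module.Basis κ S (Algebra.adjoin S (A : Set M)) :=
  (Basis.span hli).map (LinearEquiv.ofEq _ _ (Algebra.toSubmodule_adjoin_eq_span_basis A a).symm)

theorem Module.Basis.algebraAdjoin_apply {κ : Type*} {A : Subalgebra R M}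
    (a : Module.Basis κ R A) (hli : LinearIndependent S (A.val ∘ a)) (k : κ) :
    (a.algebraAdjoin hli k : M) = a k := by
  rw [Module.Basis.algebraAdjoin, Basis.map_apply]
  exact congrArg Subtype.val (Basis.span_apply hli k)

end

namespace IntermediateField

open algebraAdjoinAdjoin

variable {F₀ M : Type*} [Field F₀] [Field M] [Algebra F₀ M]

theorem extendScalars_le_sup_right_eq_adjoin (A C : IntermediateField F₀ M) :
    extendScalars (show C ≤ A ⊔ C from le_sup_right) = adjoin C (A : Set M) :=
  restrictScalars_injective F₀ <| by
    rw [extendScalars_restrictScalars, restrictScalars_adjoin_eq_sup, adjoin_self, sup_comm]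

theorem LinearDisjoint.inf_eq_of_extendScalars {C E L : IntermediateField F₀ M} {hE : C ≤ E}
    {hL : C ≤ L} (H : (extendScalars hE).LinearDisjoint (extendScalars hL)) : E ⊓ L = C := by
  have h := congrArg (restrictScalars F₀) H.inf_eq_bot
  rwa [extendScalars_inf, extendScalars_restrictScalars, restrictScalars_bot_eq_self] at h

theorem LinearDisjoint.algebraAdjoin_linearDisjoint_extendScalars
    {A F C : IntermediateField F₀ M} (h : A.LinearDisjoint F) (hCF : C ≤ F) :
    (Algebra.adjoin C (A : Set M)).LinearDisjoint (extendScalars hCF).toSubalgebra := by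
  let a := Module.Basis.ofVectorSpace F₀ A
  let b := Module.Basis.ofVectorSpace C (extendScalars hCF)
  have ha : LinearIndependent (extendScalars hCF) (A.val ∘ a) :=
    h.linearIndependent_left a.linearIndependent
  let aC := a.algebraAdjoin (ha.restrict_scalars (smul_left_injective C one_ne_zero))
  refine (Subalgebra.LinearDisjoint.of_basis_mul _ _ b aC ?_).symm
  have hprod : ∀ j k, (b j : M) * (aC k : M) = b j • (A.val ∘ a) k := fun _ k ↦
    congrArg (_ * ·) (a.algebraAdjoin_apply _ k)
  simp only [hprod]
  exact linearIndependent_smul b.linearIndependent ha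

theorem LinearDisjoint.adjoin_linearDisjoint_extendScalars
    {A F C : IntermediateField F₀ M} (h : A.LinearDisjoint F) (hCF : C ≤ F) :
    (adjoin C (A : Set M)).LinearDisjoint (extendScalars hCF) := by
  let b := Module.Basis.ofVectorSpace C (extendScalars hCF)
  refine .of_basis_right b ?_
  rw [← LinearIndependent.iff_fractionRing (Algebra.adjoin C (A : Set M))]
  have : Module.Free C (Algebra.adjoin C (A : Set M)) := .of_divisionRing _ _
  have : Module.Flat C (Algebra.adjoin C (A : Set M)) := .of_free
  exact (h.algebraAdjoin_linearDisjoint_extendScalars hCF).linearIndependent_right_of_flat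
    b.linearIndependent

end IntermediateField

/-- Lemma 4.5 (field-theoretic content): let `A`, `F`, `C` be intermediate fields of
`M/F₀` with `C ≤ F`. If `A` and `F` are linearly disjoint over `F₀`, then the compositum
`A ⊔ C` is linearly disjoint from `F` over `C`, and `(A ⊔ C) ∩ F = C`. -/
theorem compositum_linearDisjoint_over_subfield
    {F₀ M : Type*} [Field F₀] [Field M] [Algebra F₀ M]
    (A F C : IntermediateField F₀ M) (hCF : C ≤ F)
    (h : A.LinearDisjoint F) :
    (IntermediateField.extendScalars (show C ≤ A ⊔ C from le_sup_right)).LinearDisjoint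
        (IntermediateField.extendScalars hCF) ∧
      (A ⊔ C) ⊓ F = C := by
  have H : (IntermediateField.extendScalars (show C ≤ A ⊔ C from le_sup_right)).LinearDisjoint
      (IntermediateField.extendScalars hCF) := by
    rw [IntermediateField.extendScalars_le_sup_right_eq_adjoin]
    exact h.adjoin_linearDisjoint_extendScalars hCF
  exact ⟨H, H.inf_eq_of_extendScalars⟩
end

section
/- Let M be a field, F₀ a subfield of M, and let A and F be intermediate fields of M/F₀ that are linearly disjoint over F₀. Let c ∈ M be transcendental over the compositum A ⊔ FC (the subfield of M generated by A and F). Then the intermediate field A(c) generated by A and c is linearly disjoint from F over F₀, and A(c) ∩ F = F₀. -/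
/-!
Write the elements of `A(c)` as quotients of polynomials in `c` over `A`. Clearing denominators,
a relation `∑ gⱼ bⱼ = 0` over `A(c)` between elements `bⱼ` of an `F₀`-basis of `F` becomes a
polynomial over `A ⊔ F` vanishing at `c`, hence zero. Its `n`-th coefficient is `∑ aⱼₙ bⱼ` with
`aⱼₙ ∈ A`, so linear disjointness of `A` and `F` forces every `aⱼₙ` to vanish.
-/

open Polynomial IntermediateField

theorem linearIndependent_algebraAdjoin_of_transcendental {R M ι : Type*} [CommRing R]
    [CommRing M] [Algebra R M] (K : Subalgebra R M) {v : ι → M} (hvK : ∀ i, v i ∈ K)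
    (hv : LinearIndependent R v) {c : M} (hc : Transcendental K c) :
    LinearIndependent (Algebra.adjoin R {c}) v := by
  rw [linearIndependent_iff']
  intro s g hg i hi
  have hg_aeval : ∀ j, ∃ p : R[X], aeval c p = g j := fun j => by
    simpa [Algebra.adjoin_singleton_eq_range_aeval] using (g j).2
  choose p hp using hg_aeval
  suffices p i = 0 from Subtype.ext <| by rw [← hp, this, map_zero]; rfl
  set P : K[X] := ∑ j ∈ s, (p j).map (algebraMap R K) * C ⟨v j, hvK j⟩
  have hP : P = 0 := by
    refine transcendental_iff.1 hc P ?_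
    simpa [P, ← hp, Subalgebra.smul_def] using hg
  ext n
  refine linearIndependent_iff'.1 hv s (fun j => (p j).coeff n) ?_ i hi
  simpa [P, Algebra.smul_def] using congrArg (fun P : K[X] => (P.coeff n : M)) hP

open scoped IntermediateField.algebraAdjoinAdjoin in
theorem linearIndependent_adjoin_of_transcendental {R M ι : Type*} [Field R] [Field M]
    [Algebra R M] (K : IntermediateField R M) {v : ι → M} (hvK : ∀ i, v i ∈ K)
    (hv : LinearIndependent R v) {c : M} (hc : Transcendental K c) :
    LinearIndependent R⟮c⟯ v :=
  (LinearIndependent.iff_fractionRing (Algebra.adjoin R {c}) R⟮c⟯).1 <|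
    linearIndependent_algebraAdjoin_of_transcendental K.toSubalgebra hvK hv hc

/-- Lemma 4.7 (field-theoretic content): let `A`, `F` be intermediate fields of `M/F₀`
that are linearly disjoint over `F₀`, and let `c ∈ M` be transcendental over the
compositum `A ⊔ F`. Then `A(c)` is linearly disjoint from `F` over `F₀`, and
`A(c) ∩ F = F₀`. -/
theorem adjoin_transcendental_linearDisjoint
    {F₀ M : Type*} [Field F₀] [Field M] [Algebra F₀ M]
    (A F : IntermediateField F₀ M) (h : A.LinearDisjoint F)
    (c : M) (hc : Transcendental (↥(A ⊔ F)) c) :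
    (A ⊔ IntermediateField.adjoin F₀ {c}).LinearDisjoint F ∧
      (A ⊔ IntermediateField.adjoin F₀ {c}) ⊓ F = ⊥ := by
  let b := Module.Basis.ofVectorSpace F₀ F
  have H : (A ⊔ IntermediateField.adjoin F₀ {c}).LinearDisjoint F := by
    refine .of_basis_right b ?_
    rw [← restrictScalars_adjoin_eq_sup]
    exact linearIndependent_adjoin_of_transcendental (extendScalars (le_sup_left : A ≤ A ⊔ F))
      (fun i => (le_sup_right : F ≤ A ⊔ F) (b i).2) (h.linearIndependent_right b.linearIndependent)
      hc -- `A ⊔ F` and its `extendScalars` over `A` are the same field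
  exact ⟨H, H.inf_eq_bot⟩
end

section
/- Let K be a field, Γ₀ a linearly ordered commutative group with zero, v a valuation on K with values in Γ₀, ι a finite index type, P a multivariate polynomial over K in variables indexed by ι, and a : ι → K a point with P(a) ≠ 0. Then there exists a nonzero γ ∈ Γ₀ such that for every x : ι → K with v(x i − a i) < γ for all i ∈ ι, one has v(P(x) − P(a)) < v(P(a)); in particular v(P(x)) = v(P(a)) for all such x. -/
/-!
Polynomial maps are continuous for the topology defined by `v`. Since `P(a) ≠ 0`, the ball
`{y | v (y - P(a)) < v (P(a))}` is a neighbourhood of `P(a)`, so its preimage under `P` contains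
a box `{x | ∀ i, v (x i - a i) < γ}` around `a`; on that box the ultrametric inequality forces
`v (P(x)) = v (P(a))`.
-/

open MvPolynomial MonoidWithZeroHom.ValueGroup₀ Filter Topology

namespace Valued

variable {R Γ₀ : Type*} [Ring R] [LinearOrderedCommGroupWithZero Γ₀] [Valued R Γ₀]

theorem setOf_sub_lt_mem_nhds (x : R) {c : R} (hc : v c ≠ 0) :
    {y | v (y - x) < v c} ∈ 𝓝 x :=
  mem_nhds.mpr ⟨Units.mk0 (v.restrict c) (by simpa using hc), fun _ hy ↦ v.restrict_lt_iff.mp hy⟩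

theorem exists_forall_sub_lt_imp_mem_of_mem_nhds_pi {ι : Type*} [Finite ι] {s : Set (ι → R)}
    {a : ι → R} (hs : s ∈ 𝓝 a) :
    ∃ γ : Γ₀, γ ≠ 0 ∧ ∀ x, (∀ i, v (x i - a i) < γ) → x ∈ s := by
  rw [nhds_pi, mem_pi'] at hs
  obtain ⟨I, t, ht, hts⟩ := hs
  choose γ hγ using fun i ↦ mem_nhds.mp (ht i)
  obtain ⟨δ, hδ⟩ := Finite.exists_ge γ
  refine ⟨embedding δ.1, fun h ↦ δ.ne_zero (embedding_injective (h.trans (map_zero _).symm)),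
    fun x hx ↦ hts fun i _ ↦ hγ i ?_⟩
  exact (v.restrict_lt_iff_lt_embedding.mpr (hx i)).trans_le (by exact_mod_cast hδ i)

end Valued

/-- Local constancy of the leading term of a polynomial near a non-zero of `P`
(key computation in Lemma 4.9): if `P(a) ≠ 0`, then there is a nonzero `γ` such that
any point `x` with `v (x i − a i) < γ` for all `i` satisfies
`v (P(x) − P(a)) < v (P(a))`, hence `v (P(x)) = v (P(a))`. -/
theorem mvPolynomial_rv_locally_constant
    {K Γ₀ ι : Type*} [Field K] [LinearOrderedCommGroupWithZero Γ₀] [Finite ι]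
    (v : Valuation K Γ₀) (P : MvPolynomial ι K) (a : ι → K)
    (ha : MvPolynomial.eval a P ≠ 0) :
    ∃ γ : Γ₀, γ ≠ 0 ∧ ∀ x : ι → K, (∀ i, v (x i - a i) < γ) →
      v (MvPolynomial.eval x P - MvPolynomial.eval a P) < v (MvPolynomial.eval a P) ∧
      v (MvPolynomial.eval x P) = v (MvPolynomial.eval a P) := by
  let := Valued.mk' v
  have hnhds : {x : ι → K | v (eval x P - eval a P) < v (eval a P)} ∈ 𝓝 a :=
    (continuous_eval P).continuousAt.preimage_mem_nhds
      (Valued.setOf_sub_lt_mem_nhds _ ((v.ne_zero_iff).mpr ha))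
  obtain ⟨γ, hγ, hbox⟩ := Valued.exists_forall_sub_lt_imp_mem_of_mem_nhds_pi hnhds
  exact ⟨γ, hγ, fun x hx ↦ ⟨hbox x hx, v.map_eq_of_sub_lt (hbox x hx)⟩⟩
end

section
/- Let K be an algebraically closed field, Γ₀ a linearly ordered commutative group with zero, and v a valuation on K with values in Γ₀. Let n ≥ 1 be an integer and a ∈ K an element with v(aⁿ − 1) < 1. Then there exists c ∈ K with cⁿ = 1 and v(a − c) < 1; equivalently, every n-torsion class of the leading-term group RV = K*/(1+m) is represented by an n-th root of unity of K. -/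
open Polynomial

/-- Over a monic split polynomial, `v (p.eval a)` is the product of the `v (a - r)` over the
roots `r`; a product of factors `≥ 1` is `≥ 1`, so one factor must be `< 1`. -/
theorem Valuation.exists_mem_roots_lt_one_of_eval_lt_one {R Γ₀ : Type*} [CommRing R] [IsDomain R]
    [LinearOrderedCommMonoidWithZero Γ₀] (v : Valuation R Γ₀) {p : R[X]} (hs : p.Splits)
    (hm : p.Monic) {a : R} (ha : v (p.eval a) < 1) : ∃ r ∈ p.roots, v (a - r) < 1 := by
  by_contra! h
  rw [hs.eval_eq_prod_roots_of_monic hm, map_multiset_prod, Multiset.map_map] at ha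
  refine ha.not_ge (Multiset.one_le_prod_of_one_le fun x hx => ?_)
  obtain ⟨r, hr, rfl⟩ := Multiset.mem_map.mp hx
  exact h r hr

/-- Claim in the proof of quantifier elimination for ACVF in the leading-term language
(Fact 2.5): in an algebraically closed valued field, if `v (aⁿ − 1) < 1` then there is
an `n`-th root of unity `c` with `v (a − c) < 1`; i.e. every `n`-torsion class of
`RV = K*/(1+m)` is represented by an `n`-th root of unity. -/
theorem algClosed_root_of_unity_in_rv_class
    {K Γ₀ : Type*} [Field K] [IsAlgClosed K] [LinearOrderedCommGroupWithZero Γ₀]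
    (v : Valuation K Γ₀) (n : ℕ) (hn : 1 ≤ n) (a : K)
    (ha : v (a ^ n - 1) < 1) :
    ∃ c : K, c ^ n = 1 ∧ v (a - c) < 1 := by
  have hn₀ : n ≠ 0 := by omega
  obtain ⟨c, hc, hac⟩ := v.exists_mem_roots_lt_one_of_eval_lt_one
    (IsAlgClosed.splits (X ^ n - C 1)) (monic_X_pow_sub_C 1 hn₀) (a := a) (by simpa using ha)
  exact ⟨c, (mem_nthRoots (Nat.pos_of_ne_zero hn₀)).1 hc, hac⟩
end
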